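/- Let n be even and consider the two swap-invariant ideals J₊ := ⟨x^{n/2} − y^{n/2}, x^{n/2+1}, xy, y^{n/2+1}⟩ and J₋ := ⟨x^{n/2} + y^{n/2}, x^{n/2+1}, xy, y^{n/2+1}⟩ of ℂ[x,y]. For each of M± = ℂ[x,y]/J±: (i) the socle {m : x·m = y·m = 0} is one-dimensional, spanned by the class of x^{n/2}; (ii) the swap automorphism τ descends to M± and acts on the socle of M₊ by +1 and on the socle of M₋ by −1. (Hence the socles of the two D_{2n}-constellations at the stacky points B₂ and B₁ are the one-dimensional representations ρ_{n/2} and ρ'_{n/2} respectively; for n = 4 this is the paper's explicit D₈ example with J₋ = ⟨x³, y³, xy, x² + y²⟩, basis {1, x, y, x²} and socle spanned by x².) -/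

import Mathlib

open MvPolynomial

/-- The algebra automorphism `τ : x ↦ y, y ↦ x` of `ℂ[x,y]`. -/
noncomputable def tauA : MvPolynomial (Fin 2) ℂ →ₐ[ℂ] MvPolynomial (Fin 2) ℂ :=
  aeval ![X 1, X 0]

/-- `J₊ := ⟨x^{n/2} − y^{n/2}, x^{n/2+1}, xy, y^{n/2+1}⟩`. -/
noncomputable def Jplus (n : ℕ) : Ideal (MvPolynomial (Fin 2) ℂ) :=
  Ideal.span
    {X 0 ^ (n / 2) - X 1 ^ (n / 2), X 0 ^ (n / 2 + 1), X 0 * X 1, X 1 ^ (n / 2 + 1)}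

/-- `J₋ := ⟨x^{n/2} + y^{n/2}, x^{n/2+1}, xy, y^{n/2+1}⟩`. -/
noncomputable def Jminus (n : ℕ) : Ideal (MvPolynomial (Fin 2) ℂ) :=
  Ideal.span
    {X 0 ^ (n / 2) + X 1 ^ (n / 2), X 0 ^ (n / 2 + 1), X 0 * X 1, X 1 ^ (n / 2 + 1)}

/-- The socle `{m ∈ ℂ[x,y]/I : x·m = 0 ∧ y·m = 0}` of the `ℂ[x,y]`-module `ℂ[x,y]/I`,
as a `ℂ`-subspace. -/
noncomputable def socle (I : Ideal (MvPolynomial (Fin 2) ℂ)) :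
    Submodule ℂ (MvPolynomial (Fin 2) ℂ ⧸ I) where
  carrier := {m | Ideal.Quotient.mk I (X 0) * m = 0 ∧ Ideal.Quotient.mk I (X 1) * m = 0}
  add_mem' := by
    rintro p q ⟨hp1, hp2⟩ ⟨hq1, hq2⟩
    exact ⟨by rw [mul_add, hp1, hq1, add_zero], by rw [mul_add, hp2, hq2, add_zero]⟩
  zero_mem' := ⟨mul_zero _, mul_zero _⟩
  smul_mem' := by
    rintro c p ⟨hp1, hp2⟩
    exact ⟨by rw [mul_smul_comm, hp1, smul_zero], by rw [mul_smul_comm, hp2, smul_zero]⟩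

/-! Put `k = n / 2`, `g = x^k - c y^k` and `J = ⟨g, x^{k+1}, xy, y^{k+1}⟩` with `c = ±1`. Since
`x g` and `y g` already lie in the monomial ideal `⟨x^{k+1}, xy, y^{k+1}⟩`, the ideal `J` is that
monomial ideal plus the line `ℂ g`. So `p ∈ J` is read off the coefficients of the pure powers:
those of `x^i` and `y^i` with `i < k` vanish, and `coeff_{y^k} p + c · coeff_{x^k} p = 0`.
If `x m, y m ∈ J`, shifting coefficients shows that `m` has no pure powers of degree `< k`,
hence `m ≡ α x^k`. Finally `τ` sends `x^k` to `y^k ≡ c x^k`. -/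

theorem Finsupp.eq_single_zero_of_apply_one_eq_zero {M : Type*} [Zero M] {m : Fin 2 →₀ M}
    (h : m 1 = 0) : m = Finsupp.single 0 (m 0) := by
  ext i; fin_cases i <;> simp [h]

theorem Finsupp.eq_single_one_of_apply_zero_eq_zero {M : Type*} [Zero M] {m : Fin 2 →₀ M}
    (h : m 0 = 0) : m = Finsupp.single 1 (m 1) := by
  ext i; fin_cases i <;> simp [h]

namespace MvPolynomial

theorem coeff_single_add_one_X_mul {σ R : Type*} [CommSemiring R] (s : σ) (i : ℕ)
    (p : MvPolynomial σ R) :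
    coeff (Finsupp.single s (i + 1)) (X s * p) = coeff (Finsupp.single s i) p := by
  rw [add_comm, Finsupp.single_add, coeff_X_mul]

theorem coeff_single_X_mul_of_ne {σ R : Type*} [CommSemiring R] {s t : σ} (h : s ≠ t) (j : ℕ)
    (p : MvPolynomial σ R) : coeff (Finsupp.single t j) (X s * p) = 0 := by
  classical
  rw [coeff_X_mul', if_neg]
  simp [Finsupp.mem_support_iff, h]

theorem mk_eq_smul_mk_iff {σ R : Type*} [CommRing R] {I : Ideal (MvPolynomial σ R)}
    {m q : MvPolynomial σ R} {a : R} :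
    Ideal.Quotient.mk I m = a • Ideal.Quotient.mk I q ↔ m - C a * q ∈ I := by
  rw [← Ideal.Quotient.mkₐ_eq_mk R, ← map_smul, Ideal.Quotient.mkₐ_eq_mk, Ideal.Quotient.eq,
    smul_eq_C_mul]

end MvPolynomial

section CommRing

variable {R : Type*} [CommRing R] {k : ℕ} {c : R}

variable (R) in
noncomputable def crossIdeal (k : ℕ) : Ideal (MvPolynomial (Fin 2) R) :=
  Ideal.span {X 0 ^ (k + 1), X 0 * X 1, X 1 ^ (k + 1)}

variable (R) in
noncomputable def stackyIdeal (k : ℕ) (c : R) : Ideal (MvPolynomial (Fin 2) R) :=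
  Ideal.span {X 0 ^ k - C c * X 1 ^ k, X 0 ^ (k + 1), X 0 * X 1, X 1 ^ (k + 1)}

variable (R) in
theorem crossIdeal_eq_span_monomial (k : ℕ) :
    crossIdeal R k = Ideal.span ((fun s => monomial s (1 : R)) ''
      {Finsupp.single 0 (k + 1), Finsupp.single 0 1 + Finsupp.single 1 1,
        Finsupp.single 1 (k + 1)}) := by
  have hxy : monomial (Finsupp.single 0 1 + Finsupp.single 1 1) (1 : R) =
      (X 0 * X 1 : MvPolynomial (Fin 2) R) := by
    rw [X, X, monomial_mul, one_mul]
  simp only [crossIdeal, Set.image_insert_eq, Set.image_singleton, ← X_pow_eq_monomial, hxy]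

theorem crossIdeal_generator_le_iff (k : ℕ) (m : Fin 2 →₀ ℕ) :
    (Finsupp.single 0 (k + 1) ≤ m ∨ Finsupp.single 0 1 + Finsupp.single 1 1 ≤ m ∨
      Finsupp.single 1 (k + 1) ≤ m) ↔ k < m 0 ∨ (0 < m 0 ∧ 0 < m 1) ∨ k < m 1 := by
  simp only [Finsupp.le_def, Fin.forall_fin_two, Finsupp.coe_add, Pi.add_apply,
    Finsupp.single_eq_same, Finsupp.single_eq_of_ne one_ne_zero, Finsupp.single_eq_of_ne zero_ne_one]
  omega

theorem mem_crossIdeal_iff {p : MvPolynomial (Fin 2) R} :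
    p ∈ crossIdeal R k ↔
      (∀ i ≤ k, coeff (Finsupp.single 0 i) p = 0) ∧ ∀ j ≤ k, coeff (Finsupp.single 1 j) p = 0 := by
  rw [crossIdeal_eq_span_monomial, mem_ideal_span_monomial_image]
  simp only [Set.mem_insert_iff, Set.mem_singleton_iff, exists_eq_or_imp, exists_eq_left,
    mem_support_iff, crossIdeal_generator_le_iff]
  constructor
  · intro h
    refine ⟨fun i hi => ?_, fun j hj => ?_⟩ <;> by_contra hne
    · exact absurd (h _ hne) (by simpa using hi)
    · exact absurd (h _ hne) (by simpa using hj)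
  · rintro ⟨h0, h1⟩ m hm
    by_contra! hcon
    rcases Nat.eq_zero_or_pos (m 0) with hx | hx
    · exact hm (Finsupp.eq_single_one_of_apply_zero_eq_zero (m := m) hx ▸ h1 _ (by omega))
    · exact hm (Finsupp.eq_single_zero_of_apply_one_eq_zero (m := m) (by omega) ▸ h0 _ (by omega))

theorem X_mul_mem_crossIdeal (hk : k ≠ 0) (c : R) (i : Fin 2) :
    X i * (X 0 ^ k - C c * X 1 ^ k) ∈ crossIdeal R k := by
  obtain ⟨k, rfl⟩ := Nat.exists_eq_add_one_of_ne_zero hk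
  have hx : (X 0 ^ (k + 2) : MvPolynomial (Fin 2) R) ∈ crossIdeal R (k + 1) :=
    Ideal.subset_span (by simp)
  have hxy : (X 0 * X 1 : MvPolynomial (Fin 2) R) ∈ crossIdeal R (k + 1) :=
    Ideal.subset_span (by simp)
  have hy : (X 1 ^ (k + 2) : MvPolynomial (Fin 2) R) ∈ crossIdeal R (k + 1) :=
    Ideal.subset_span (by simp)
  obtain rfl | rfl := Fin.exists_fin_two.mp ⟨i, rfl⟩
  · convert sub_mem hx (Ideal.mul_mem_left _ (C c * X 1 ^ k) hxy) using 1
    ring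
  · convert sub_mem (Ideal.mul_mem_left _ (X 0 ^ k) hxy) (Ideal.mul_mem_left _ (C c) hy) using 1
    ring

theorem mem_stackyIdeal_iff_exists (hk : k ≠ 0) {p : MvPolynomial (Fin 2) R} :
    p ∈ stackyIdeal R k c ↔ ∃ a : R, p - C a * (X 0 ^ k - C c * X 1 ^ k) ∈ crossIdeal R k := by
  set g : MvPolynomial (Fin 2) R := X 0 ^ k - C c * X 1 ^ k
  have hsup : stackyIdeal R k c = Ideal.span {g} ⊔ crossIdeal R k := Ideal.span_insert _ _
  constructor
  · intro hp
    rw [hsup, Submodule.mem_sup] at hp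
    obtain ⟨_, hy, z, hz, rfl⟩ := hp
    obtain ⟨r, rfl⟩ := Ideal.mem_span_singleton'.mp hy
    -- `r g ≡ r(0) g`, because the variables multiply `g` into the cross ideal
    have hvars : r - C (constantCoeff r) ∈ idealOfVars (Fin 2) R := by
      rw [← pow_one (idealOfVars _ _), mem_pow_idealOfVars_iff']
      intro m hm
      obtain rfl : m = 0 := (Finsupp.degree_eq_zero_iff m).mp (Nat.lt_one_iff.mp hm)
      simp [constantCoeff_eq]
    have hcolon : idealOfVars (Fin 2) R ≤ (crossIdeal R k).colon (Ideal.span {g}) :=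
      Ideal.span_le.mpr (Set.range_subset_iff.mpr fun i =>
        Submodule.mem_colon_span_singleton.mpr (X_mul_mem_crossIdeal hk c i))
    refine ⟨constantCoeff r, ?_⟩
    convert add_mem (Submodule.mem_colon_span_singleton.mp (hcolon hvars)) hz using 1
    rw [smul_eq_mul]
    ring
  · rintro ⟨a, ha⟩
    have hg : g ∈ stackyIdeal R k c := Ideal.subset_span (Set.mem_insert g _)
    have hcross : crossIdeal R k ≤ stackyIdeal R k c := hsup ▸ le_sup_right
    simpa using add_mem (Ideal.mul_mem_left _ (C a) hg) (hcross ha)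

theorem coeff_single_zero_X_pow_sub (hk : k ≠ 0) (c : R) (i : ℕ) :
    coeff (Finsupp.single 0 i) (X 0 ^ k - C c * X 1 ^ k : MvPolynomial (Fin 2) R) =
      if i = k then 1 else 0 := by
  simp [coeff_X_pow, Finsupp.single_eq_single_iff, hk, eq_comm]

theorem coeff_single_one_X_pow_sub (hk : k ≠ 0) (c : R) (j : ℕ) :
    coeff (Finsupp.single 1 j) (X 0 ^ k - C c * X 1 ^ k : MvPolynomial (Fin 2) R) =
      if j = k then -c else 0 := by
  simp [coeff_X_pow, Finsupp.single_eq_single_iff, hk, eq_comm, neg_ite]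

theorem mem_stackyIdeal_iff (hk : k ≠ 0) {p : MvPolynomial (Fin 2) R} :
    p ∈ stackyIdeal R k c ↔
      (∀ i < k, coeff (Finsupp.single 0 i) p = 0) ∧ (∀ j < k, coeff (Finsupp.single 1 j) p = 0) ∧
        coeff (Finsupp.single 1 k) p + c * coeff (Finsupp.single 0 k) p = 0 := by
  simp only [mem_stackyIdeal_iff_exists hk, mem_crossIdeal_iff, coeff_sub, coeff_C_mul,
    coeff_single_zero_X_pow_sub hk, coeff_single_one_X_pow_sub hk]
  constructor
  · rintro ⟨a, h0, h1⟩
    refine ⟨fun i hi => by simpa [hi.ne] using h0 i hi.le,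
      fun j hj => by simpa [hj.ne] using h1 j hj.le, ?_⟩
    have hx := h0 k le_rfl
    have hy := h1 k le_rfl
    simp only [if_true, mul_one, mul_neg] at hx hy
    linear_combination hy + c * hx
  · rintro ⟨h0, h1, hkk⟩
    refine ⟨coeff (Finsupp.single 0 k) p, fun i hi => ?_, fun j hj => ?_⟩
    · rcases hi.lt_or_eq with hi | rfl
      · simp [h0 i hi, hi.ne]
      · simp
    · rcases hj.lt_or_eq with hj | rfl
      · simp [h1 j hj, hj.ne]
      · simp only [if_true]
        linear_combination hkk

theorem coeff_single_zero_eq_zero_of_X_zero_mul_mem [NoZeroDivisors R] (hk : k ≠ 0) (hc : c ≠ 0)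
    {m : MvPolynomial (Fin 2) R} (h : X 0 * m ∈ stackyIdeal R k c) :
    ∀ i < k, coeff (Finsupp.single 0 i) m = 0 := by
  obtain ⟨h0, -, hkk⟩ := (mem_stackyIdeal_iff hk).mp h
  intro i hi
  rcases (Nat.succ_le_of_lt hi).lt_or_eq with hi | rfl
  · simpa only [coeff_single_add_one_X_mul] using h0 (i + 1) hi
  · rw [coeff_single_X_mul_of_ne zero_ne_one, coeff_single_add_one_X_mul, zero_add] at hkk
    exact (mul_eq_zero.mp hkk).resolve_left hc

theorem coeff_single_one_eq_zero_of_X_one_mul_mem (hk : k ≠ 0)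
    {m : MvPolynomial (Fin 2) R} (h : X 1 * m ∈ stackyIdeal R k c) :
    ∀ j < k, coeff (Finsupp.single 1 j) m = 0 := by
  obtain ⟨-, h1, hkk⟩ := (mem_stackyIdeal_iff hk).mp h
  intro j hj
  rcases (Nat.succ_le_of_lt hj).lt_or_eq with hj | rfl
  · simpa only [coeff_single_add_one_X_mul] using h1 (j + 1) hj
  · rwa [coeff_single_X_mul_of_ne one_ne_zero, coeff_single_add_one_X_mul, mul_zero,
      add_zero] at hkk

theorem X_zero_pow_notMem_stackyIdeal [Nontrivial R] (hk : k ≠ 0) (hc : c ≠ 0) :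
    X 0 ^ k ∉ stackyIdeal R k c := by
  rw [mem_stackyIdeal_iff hk]
  simp [coeff_X_pow, Finsupp.single_eq_single_iff, hk, hc]

theorem X_one_pow_sub_mem_stackyIdeal (hc : c * c = 1) :
    X 1 ^ k - C c * X 0 ^ k ∈ stackyIdeal R k c := by
  have hg : X 0 ^ k - C c * X 1 ^ k ∈ stackyIdeal R k c := Ideal.subset_span (by simp)
  have hC : C c * C c = (1 : MvPolynomial (Fin 2) R) := by rw [← map_mul, hc, map_one]
  convert Ideal.mul_mem_left _ (-C c) hg using 1
  linear_combination -(X 1 ^ k) * hC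

end CommRing

section Complex

variable {k : ℕ} {c : ℂ}

theorem socle_stackyIdeal (hk : k ≠ 0) (hc : c ≠ 0) :
    socle (stackyIdeal ℂ k c) =
      Submodule.span ℂ {Ideal.Quotient.mk (stackyIdeal ℂ k c) (X 0 ^ k)} := by
  apply le_antisymm
  · intro m' hm
    obtain ⟨m, rfl⟩ := Ideal.Quotient.mk_surjective m'
    obtain ⟨hx, hy⟩ := hm
    rw [← map_mul, Ideal.Quotient.eq_zero_iff_mem] at hx hy
    have h0 := coeff_single_zero_eq_zero_of_X_zero_mul_mem hk hc hx
    have h1 := coeff_single_one_eq_zero_of_X_one_mul_mem hk hy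
    obtain ⟨a, ha⟩ : ∃ a, a = coeff (Finsupp.single 0 k) m + c⁻¹ * coeff (Finsupp.single 1 k) m :=
      ⟨_, rfl⟩
    refine Submodule.mem_span_singleton.mpr ⟨a, ?_⟩
    rw [eq_comm, mk_eq_smul_mk_iff, mem_stackyIdeal_iff hk]
    refine ⟨fun i hi => ?_, fun j hj => ?_, ?_⟩
    · simp [coeff_X_pow, Finsupp.single_eq_single_iff, h0 i hi, hi.ne', hk]
    · simp [coeff_X_pow, Finsupp.single_eq_single_iff, h1 j hj, hk]
    · simp only [coeff_sub, coeff_C_mul, coeff_X_pow, Finsupp.single_eq_single_iff, hk,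
        zero_ne_one, and_true, and_self, or_self, if_true, if_false]
      linear_combination (-coeff (Finsupp.single 1 k) m) * mul_inv_cancel₀ hc - c * ha
  · rw [Submodule.span_le, Set.singleton_subset_iff]
    constructor
    · rw [← map_mul, Ideal.Quotient.eq_zero_iff_mem, ← pow_succ']
      exact Ideal.subset_span (by simp)
    · obtain ⟨k, rfl⟩ := Nat.exists_eq_add_one_of_ne_zero hk
      rw [← map_mul, Ideal.Quotient.eq_zero_iff_mem, pow_succ, mul_comm, mul_assoc]
      exact Ideal.mul_mem_left _ _ (Ideal.subset_span (by simp))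

theorem finrank_socle_stackyIdeal (hk : k ≠ 0) (hc : c ≠ 0) :
    Module.finrank ℂ (socle (stackyIdeal ℂ k c)) = 1 := by
  rw [socle_stackyIdeal hk hc, finrank_span_singleton
    (mt Ideal.Quotient.eq_zero_iff_mem.mp (X_zero_pow_notMem_stackyIdeal hk hc))]

theorem tauA_X_zero : tauA (X 0) = X 1 := by simp [tauA]

theorem tauA_X_one : tauA (X 1) = X 0 := by simp [tauA]

theorem tauA_C (a : ℂ) : tauA (C a) = C a := by simp [tauA]

theorem stackyIdeal_le_comap_tauA (hc : c * c = 1) :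
    stackyIdeal ℂ k c ≤ (stackyIdeal ℂ k c).comap tauA := by
  refine Ideal.span_le.mpr ?_
  have hmem (p) (hp : p ∈ ({X 0 ^ k - C c * X 1 ^ k, X 0 ^ (k + 1), X 0 * X 1, X 1 ^ (k + 1)} :
      Set (MvPolynomial (Fin 2) ℂ))) : p ∈ stackyIdeal ℂ k c := Ideal.subset_span hp
  rintro p (rfl | rfl | rfl | rfl) <;>
    simp only [SetLike.mem_coe, Ideal.mem_comap, map_sub, map_mul, map_pow, tauA_C, tauA_X_zero,
      tauA_X_one]
  · exact X_one_pow_sub_mem_stackyIdeal hc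
  · exact hmem _ (by simp)
  · rw [mul_comm]
    exact hmem _ (by simp)
  · exact hmem _ (by simp)

theorem exists_tauA_lift (hc : c * c = 1) :
    ∃ τbar : (MvPolynomial (Fin 2) ℂ ⧸ stackyIdeal ℂ k c) →ₗ[ℂ]
        (MvPolynomial (Fin 2) ℂ ⧸ stackyIdeal ℂ k c),
      (∀ f, τbar (Ideal.Quotient.mk _ f) = Ideal.Quotient.mk _ (tauA f)) ∧
        τbar (Ideal.Quotient.mk _ (X 0 ^ k)) = c • Ideal.Quotient.mk _ (X 0 ^ k) := by
  refine ⟨(Ideal.quotientMapₐ _ tauA (stackyIdeal_le_comap_tauA hc)).toLinearMap,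
    fun _ => rfl, ?_⟩
  change Ideal.Quotient.mk _ (tauA (X 0 ^ k)) = _
  rw [map_pow, tauA_X_zero, mk_eq_smul_mk_iff]
  exact X_one_pow_sub_mem_stackyIdeal hc

end Complex

/-- for even `n`, the socles of `M± = ℂ[x,y]/J±` are one-dimensional,
spanned by the class of `x^{n/2}`, and the swap `τ` descends to `M±`, acting on the socle
of `M₊` by `+1` and on the socle of `M₋` by `−1`. -/
theorem stacky_point_socles (n : ℕ) (hn : 1 ≤ n) (heven : Even n) :
    (socle (Jplus n) = Submodule.span ℂ {Ideal.Quotient.mk (Jplus n) (X 0 ^ (n / 2))} ∧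
      Module.finrank ℂ (socle (Jplus n)) = 1 ∧
      ∃ τbar : (MvPolynomial (Fin 2) ℂ ⧸ Jplus n) →ₗ[ℂ] (MvPolynomial (Fin 2) ℂ ⧸ Jplus n),
        (∀ f : MvPolynomial (Fin 2) ℂ,
          τbar (Ideal.Quotient.mk (Jplus n) f) = Ideal.Quotient.mk (Jplus n) (tauA f)) ∧
        τbar (Ideal.Quotient.mk (Jplus n) (X 0 ^ (n / 2))) =
          Ideal.Quotient.mk (Jplus n) (X 0 ^ (n / 2))) ∧
    (socle (Jminus n) = Submodule.span ℂ {Ideal.Quotient.mk (Jminus n) (X 0 ^ (n / 2))} ∧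
      Module.finrank ℂ (socle (Jminus n)) = 1 ∧
      ∃ τbar : (MvPolynomial (Fin 2) ℂ ⧸ Jminus n) →ₗ[ℂ] (MvPolynomial (Fin 2) ℂ ⧸ Jminus n),
        (∀ f : MvPolynomial (Fin 2) ℂ,
          τbar (Ideal.Quotient.mk (Jminus n) f) = Ideal.Quotient.mk (Jminus n) (tauA f)) ∧
        τbar (Ideal.Quotient.mk (Jminus n) (X 0 ^ (n / 2))) =
          -Ideal.Quotient.mk (Jminus n) (X 0 ^ (n / 2))) := by
  have hk : n / 2 ≠ 0 := by
    obtain ⟨m, rfl⟩ := heven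
    omega
  have hplus : Jplus n = stackyIdeal ℂ (n / 2) 1 := by simp [Jplus, stackyIdeal]
  have hminus : Jminus n = stackyIdeal ℂ (n / 2) (-1) := by simp [Jminus, stackyIdeal]
  obtain ⟨τp, hτp, hp⟩ := exists_tauA_lift (k := n / 2) (c := 1) (by norm_num)
  obtain ⟨τm, hτm, hm⟩ := exists_tauA_lift (k := n / 2) (c := -1) (by norm_num)
  rw [one_smul] at hp
  rw [neg_one_smul] at hm
  rw [hplus, hminus]
  exact ⟨⟨socle_stackyIdeal hk one_ne_zero, finrank_socle_stackyIdeal hk one_ne_zero, τp, hτp, hp⟩,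
    ⟨socle_stackyIdeal hk (by norm_num), finrank_socle_stackyIdeal hk (by norm_num), τm, hτm, hm⟩⟩
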